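/- Define J(ω, T) = ∫₀^T (cos(2t) − cos(ωt))² dt for ω ∈ ℝ and T > 0. If ω₁ ∉ {0, 2, −2} and ω₂ ∉ {0, 2, −2}, then J(ω₁, T)/J(ω₂, T) → 1 as T → ∞; that is, the least squares objective asymptotically fails to distinguish between any two incorrect frequencies, no matter how close one of them is to the true frequency. -/

import Mathlib

/-!
Expanding the square by the product-to-sum formulas,
`(cos at - cos bt)² = 1 + cos(2at)/2 + cos(2bt)/2 - cos((a+b)t) - cos((a-b)t)`.
When all the frequencies `2a, 2b, a + b, a - b` are nonzero, every cosine integrates to a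
bounded function of `T`, so the misfit is `T + O(1)`. Both misfits are therefore asymptotically
equivalent to `T`, so their ratio is asymptotically equivalent to `T / T = 1`.
-/

open Real Filter Asymptotics

lemma sq_cos_sub_cos (x y : ℝ) :
    (cos x - cos y) ^ 2 = 1 + cos (2 * x) / 2 + cos (2 * y) / 2 - cos (x + y) - cos (x - y) := by
  rw [cos_two_mul, cos_two_mul, cos_add, cos_sub]
  nlinarith [sin_sq_add_cos_sq x, sin_sq_add_cos_sq y]

lemma integral_cos_mul {c : ℝ} (hc : c ≠ 0) (T : ℝ) :
    ∫ t in (0 : ℝ)..T, cos (c * t) = sin (c * T) / c := by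
  rw [intervalIntegral.integral_comp_mul_left cos hc, integral_cos]
  simp [div_eq_inv_mul]

lemma integral_cos_mul_isBigO_one {c : ℝ} (hc : c ≠ 0) (l : Filter ℝ) :
    (fun T => ∫ t in (0 : ℝ)..T, cos (c * t)) =O[l] fun _ => (1 : ℝ) := by
  refine IsBigO.of_bound |c|⁻¹ (Eventually.of_forall fun T => ?_)
  rw [integral_cos_mul hc, norm_div, norm_one, mul_one, div_eq_mul_inv, Real.norm_eq_abs]
  exact mul_le_of_le_one_left (by positivity) (abs_sin_le_one _)

lemma integral_sq_cos_mul_sub_cos_mul (a b T : ℝ) :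
    ∫ t in (0 : ℝ)..T, (cos (a * t) - cos (b * t)) ^ 2 =
      T + 2⁻¹ * (∫ t in (0 : ℝ)..T, cos (2 * a * t)) + 2⁻¹ * (∫ t in (0 : ℝ)..T, cos (2 * b * t))
        - (∫ t in (0 : ℝ)..T, cos ((a + b) * t)) - ∫ t in (0 : ℝ)..T, cos ((a - b) * t) := by
  have hexpand (t : ℝ) : (cos (a * t) - cos (b * t)) ^ 2 =
      1 + 2⁻¹ * cos (2 * a * t) + 2⁻¹ * cos (2 * b * t) - cos ((a + b) * t) - cos ((a - b) * t) := by
    rw [sq_cos_sub_cos]; ring_nf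
  simp_rw [hexpand]
  rw [intervalIntegral.integral_sub, intervalIntegral.integral_sub, intervalIntegral.integral_add,
    intervalIntegral.integral_add, intervalIntegral.integral_const_mul,
    intervalIntegral.integral_const_mul]
  · rw [intervalIntegral.integral_const, sub_zero, smul_eq_mul, mul_one]
  all_goals exact (by fun_prop : Continuous _).intervalIntegrable _ _

lemma integral_sq_cos_mul_sub_cos_mul_isEquivalent_id {a b : ℝ} (ha : a ≠ 0) (hb : b ≠ 0)
    (hab : a + b ≠ 0) (hab' : a - b ≠ 0) :
    (fun T => ∫ t in (0 : ℝ)..T, (cos (a * t) - cos (b * t)) ^ 2) ~[atTop] id := by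
  have hO (c : ℝ) (hc : c ≠ 0) := integral_cos_mul_isBigO_one hc atTop
  have hbounded : (fun T => (∫ t in (0 : ℝ)..T, (cos (a * t) - cos (b * t)) ^ 2) - T)
      =O[atTop] fun _ => (1 : ℝ) := by
    refine (((((hO (2 * a) (mul_ne_zero two_ne_zero ha)).const_mul_left 2⁻¹).add
      ((hO (2 * b) (mul_ne_zero two_ne_zero hb)).const_mul_left 2⁻¹)).sub (hO _ hab)).sub
      (hO _ hab')).congr_left fun T => ?_
    rw [integral_sq_cos_mul_sub_cos_mul]
    ring
  exact (hbounded.trans_isLittleO (isLittleO_const_id_atTop 1)).isEquivalent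

/-- For the least squares misfit `J(ω, T) = ∫₀^T (cos 2t − cos ωt)² dt`, if
`ω₁ ∉ {0, 2, −2}` and `ω₂ ∉ {0, 2, −2}` then `J(ω₁, T)/J(ω₂, T) → 1` as `T → ∞`:
the objective asymptotically fails to distinguish any two incorrect frequencies. -/
theorem least_squares_misfit_ratio_tendsto_one
    (ω₁ ω₂ : ℝ) (hω₁ : ω₁ ∉ ({0, 2, -2} : Set ℝ)) (hω₂ : ω₂ ∉ ({0, 2, -2} : Set ℝ)) :
    Tendsto (fun T : ℝ =>
        (∫ t in (0 : ℝ)..T, (Real.cos (2 * t) - Real.cos (ω₁ * t)) ^ 2) /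
        (∫ t in (0 : ℝ)..T, (Real.cos (2 * t) - Real.cos (ω₂ * t)) ^ 2))
      atTop (nhds 1) := by
  have hJ (ω : ℝ) (hω : ω ∉ ({0, 2, -2} : Set ℝ)) :
      (fun T => ∫ t in (0 : ℝ)..T, (cos (2 * t) - cos (ω * t)) ^ 2) ~[atTop] id := by
    simp only [Set.mem_insert_iff, Set.mem_singleton_iff, not_or] at hω
    obtain ⟨h0, h2, hm2⟩ := hω
    exact integral_sq_cos_mul_sub_cos_mul_isEquivalent_id two_ne_zero h0
      (by contrapose! hm2; linarith) (sub_ne_zero.2 (Ne.symm h2))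
  have hid : Tendsto (fun T : ℝ => T / T) atTop (nhds 1) :=
    tendsto_const_nhds.congr' ((eventually_ne_atTop 0).mono fun T hT => (div_self hT).symm)
  exact ((hJ ω₁ hω₁).div (hJ ω₂ hω₂)).symm.tendsto_nhds hid
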